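/- arXiv:1801.06918 — 5 statements merged into one kernel-verified Lean document; each statement's English description precedes it below -/
import Mathlib

section
/- Let p be a prime and k ≥ 1 an integer. Let ζ be a fixed primitive p^k-th root of unity in the cyclotomic field ℚ(ζ_{p^k}), and set η = ζ + ζ^p + ζ^{p^2} + ⋯ + ζ^{p^{k−1}} (the sum of the k elements ζ^{p^j} for 0 ≤ j ≤ k−1). Then the family (σ(η)), indexed by the automorphisms σ in the Galois group Gal(ℚ(ζ_{p^k})/ℚ), is a basis of ℚ(ζ_{p^k}) as a ℚ-vector space; that is, η is a normal basis generator of the extension ℚ(ζ_{p^k})/ℚ. -/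
/-!
For `u` prime to `p` some `σ` maps `ζ` to `ζ ^ u`, so the `ℚ`-span `S` of the conjugates of
`η` contains every `η_u = ∑_{i<k} ζ ^ (u p^i)`. Summing `η_{a + s p^(k-j)}` over `s < p^j` kills the
terms with `i < j` (each becomes a full sum of a nontrivial `p^j`-th root of unity) and multiplies
the others by `p^j`; hence `S` contains the tails `∑_{j ≤ i < k} ζ ^ (a p^i)`, their consecutive
differences `ζ ^ (a p^j)`, and `1 = -∑_{0<a<p} ζ ^ (a p^(k-1))`. So `S` contains every power of `ζ`,
and `#Gal = [ℚ(ζ) : ℚ]` spanning vectors form a basis.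
-/

/-- `x` is a normal basis generator of a field `K` over `ℚ`:
the family `(σ x)` indexed by `σ ∈ Gal(K/ℚ)` is a `ℚ`-basis of `K`. -/
def IsNormalBasisGenerator (K : Type*) [Field K] [Algebra ℚ K] (x : K) : Prop :=
  ∃ B : Module.Basis (K ≃ₐ[ℚ] K) ℚ K, ∀ σ : K ≃ₐ[ℚ] K, B σ = σ x

open Finset

namespace IsPrimitiveRoot

section GeomSum

variable {R : Type*} [CommRing R] [IsDomain R] {p k : ℕ} {ζ : R}

theorem geom_sum_pow_prime_pow (hp : p.Prime) (hζ : IsPrimitiveRoot ζ (p ^ k)) {j : ℕ}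
    (hj : j ≤ k) (i : ℕ) :
    ∑ s ∈ range (p ^ j), (ζ ^ (p ^ (k - j) * p ^ i)) ^ s = if j ≤ i then (p ^ j : R) else 0 := by
  rw [← pow_add]
  split_ifs with hji
  · have hω : ζ ^ p ^ (k - j + i) = 1 :=
      hζ.pow_eq_one_iff_dvd _ |>.mpr (pow_dvd_pow p (by omega))
    simp [hω]
  · have hω : ζ ^ p ^ (k - j + i) ≠ 1 :=
      hζ.pow_ne_one_of_pos_of_lt (pow_pos hp.pos _).ne' (Nat.pow_lt_pow_right hp.one_lt (by omega))
    have hω_pow : (ζ ^ p ^ (k - j + i)) ^ p ^ j = 1 := by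
      rw [← pow_mul, ← pow_add, hζ.pow_eq_one_iff_dvd]
      exact pow_dvd_pow p (by omega)
    have hgeom := geom_sum_mul (ζ ^ p ^ (k - j + i)) (p ^ j)
    rw [hω_pow, sub_self, mul_eq_zero] at hgeom
    exact hgeom.resolve_right (sub_ne_zero.mpr hω)

theorem sum_sum_pow_add_mul_prime_pow (hp : p.Prime) (hζ : IsPrimitiveRoot ζ (p ^ k)) {j : ℕ}
    (hj : j ≤ k) (a : ℕ) :
    ∑ s ∈ range (p ^ j), ∑ i ∈ range k, (ζ ^ (a + s * p ^ (k - j))) ^ p ^ i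
      = (p ^ j : R) * ∑ i ∈ Ico j k, (ζ ^ a) ^ p ^ i := by
  have hterm : ∀ s i, (ζ ^ (a + s * p ^ (k - j))) ^ p ^ i
      = (ζ ^ a) ^ p ^ i * (ζ ^ (p ^ (k - j) * p ^ i)) ^ s := by
    intro s i
    simp only [← pow_mul, ← pow_add]
    ring_nf
  have hIco : (range k).filter (j ≤ ·) = Ico j k := by
    ext i; simp only [mem_filter, mem_range, mem_Ico]; omega
  calc ∑ s ∈ range (p ^ j), ∑ i ∈ range k, (ζ ^ (a + s * p ^ (k - j))) ^ p ^ i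
      = ∑ i ∈ range k, (ζ ^ a) ^ p ^ i * ∑ s ∈ range (p ^ j), (ζ ^ (p ^ (k - j) * p ^ i)) ^ s := by
        simp only [hterm, mul_sum]
        exact sum_comm
    _ = ∑ i ∈ range k, if j ≤ i then (ζ ^ a) ^ p ^ i * p ^ j else 0 := by
        simp only [geom_sum_pow_prime_pow hp hζ hj, mul_ite, mul_zero]
    _ = (p ^ j : R) * ∑ i ∈ Ico j k, (ζ ^ a) ^ p ^ i := by
        rw [← sum_filter, hIco, mul_sum]
        simp only [mul_comm]

end GeomSum

section Span

variable {F R : Type*} [Field F] [CharZero F] [CommRing R] [IsDomain R] [Module F R]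
  {p k : ℕ} {ζ : R} {S : Submodule F R}

theorem sum_Ico_pow_prime_pow_mem (hp : p.Prime) (hζ : IsPrimitiveRoot ζ (p ^ k))
    (hS : ∀ u : ℕ, u.Coprime p → ∑ i ∈ range k, (ζ ^ u) ^ p ^ i ∈ S)
    {a : ℕ} (ha : a.Coprime p) {j : ℕ} (hj : j ≤ k) :
    ∑ i ∈ Ico j k, (ζ ^ a) ^ p ^ i ∈ S := by
  obtain rfl | hjk := hj.eq_or_lt
  · simp
  have hkj : 0 < k - j := by omega
  have hcop : ∀ s, (a + s * p ^ (k - j)).Coprime p := fun s =>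
    (Nat.coprime_pow_right_iff hkj _ _).mp <| (Nat.coprime_add_mul_right_left _ _ _).mpr <|
      (Nat.coprime_pow_right_iff hkj _ _).mpr ha
  have hmem := S.sum_mem fun s (_ : s ∈ range (p ^ j)) => hS _ (hcop s)
  rw [sum_sum_pow_add_mul_prime_pow hp hζ hj, ← Nat.cast_pow, ← nsmul_eq_mul,
    ← Nat.cast_smul_eq_nsmul F] at hmem
  exact (S.smul_mem_iff (by exact_mod_cast (pow_pos hp.pos j).ne')).mp hmem

theorem pow_pow_prime_pow_mem (hp : p.Prime) (hζ : IsPrimitiveRoot ζ (p ^ k))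
    (hS : ∀ u : ℕ, u.Coprime p → ∑ i ∈ range k, (ζ ^ u) ^ p ^ i ∈ S)
    {a : ℕ} (ha : a.Coprime p) {j : ℕ} (hj : j < k) :
    (ζ ^ a) ^ p ^ j ∈ S := by
  have h := S.sub_mem (sum_Ico_pow_prime_pow_mem hp hζ hS ha hj.le)
    (sum_Ico_pow_prime_pow_mem hp hζ hS ha hj)
  rwa [sum_eq_sum_Ico_succ_bot hj, add_sub_cancel_right] at h

theorem one_mem_of_forall_coprime_sum_mem (hp : p.Prime) (hk : 1 ≤ k)
    (hζ : IsPrimitiveRoot ζ (p ^ k))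
    (hS : ∀ u : ℕ, u.Coprime p → ∑ i ∈ range k, (ζ ^ u) ^ p ^ i ∈ S) :
    (1 : R) ∈ S := by
  have hω : IsPrimitiveRoot (ζ ^ p ^ (k - 1)) p :=
    hζ.pow (pow_pos hp.pos k) (by rw [← pow_succ]; congr 1; omega)
  have hsum := hω.geom_sum_eq_zero hp.one_lt
  rw [range_eq_Ico, sum_eq_sum_Ico_succ_bot hp.pos, pow_zero, ← eq_neg_iff_add_eq_zero] at hsum
  rw [hsum]
  refine S.neg_mem <| S.sum_mem fun i hi => ?_
  obtain ⟨hi0, hip⟩ := mem_Ico.mp hi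
  rw [← pow_mul, mul_comm, pow_mul]
  exact pow_pow_prime_pow_mem hp hζ hS (Nat.coprime_of_lt_prime (by omega) hip hp).symm (by omega)

theorem pow_mem_of_forall_coprime_sum_mem (hp : p.Prime) (hk : 1 ≤ k)
    (hζ : IsPrimitiveRoot ζ (p ^ k))
    (hS : ∀ u : ℕ, u.Coprime p → ∑ i ∈ range k, (ζ ^ u) ^ p ^ i ∈ S) (m : ℕ) :
    ζ ^ m ∈ S := by
  by_cases hm : p ^ k ∣ m
  · rw [(hζ.pow_eq_one_iff_dvd m).mpr hm]
    exact one_mem_of_forall_coprime_sum_mem hp hk hζ hS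
  have hm0 : m ≠ 0 := by rintro rfl; exact hm (dvd_zero _)
  obtain ⟨e, a, hpa, rfl⟩ := Nat.exists_eq_pow_mul_and_not_dvd hm0 p hp.ne_one
  have hek : e < k := by
    by_contra! hke
    exact hm (Dvd.dvd.mul_right (pow_dvd_pow p hke) a)
  rw [mul_comm, pow_mul]
  exact pow_pow_prime_pow_mem hp hζ hS (hp.coprime_iff_not_dvd.mpr hpa).symm hek

end Span

end IsPrimitiveRoot

theorem IsCyclotomicExtension.exists_algEquiv_apply_eq_pow {n : ℕ} [NeZero n] {K : Type*}
    [Field K] [Algebra ℚ K] [IsCyclotomicExtension {n} ℚ K] {ζ : K} (hζ : IsPrimitiveRoot ζ n)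
    {u : ℕ} (hu : u.Coprime n) : ∃ σ : K ≃ₐ[ℚ] K, σ ζ = ζ ^ u := by
  have hirr := Polynomial.cyclotomic.irreducible_rat (NeZero.pos n)
  have hζu := hζ.pow_of_coprime u hu
  refine ⟨(hζ.powerBasis ℚ).equivOfMinpoly (hζu.powerBasis ℚ) ?_, ?_⟩
  · rw [IsPrimitiveRoot.powerBasis_gen, IsPrimitiveRoot.powerBasis_gen,
      ← hζ.minpoly_eq_cyclotomic_of_irreducible hirr,
      ← hζu.minpoly_eq_cyclotomic_of_irreducible hirr]
  · exact PowerBasis.equivOfMinpoly_gen _ _ _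

theorem isNormalBasisGenerator_of_top_le_span {K : Type*} [Field K] [Algebra ℚ K]
    [FiniteDimensional ℚ K] [IsGalois ℚ K] {x : K}
    (h : ⊤ ≤ Submodule.span ℚ (Set.range fun σ : K ≃ₐ[ℚ] K => σ x)) :
    IsNormalBasisGenerator K x := by
  have hcard : Fintype.card (K ≃ₐ[ℚ] K) = Module.finrank ℚ K := by
    rw [← Nat.card_eq_fintype_card, IsGalois.card_aut_eq_finrank]
  exact ⟨basisOfTopLeSpanOfCardEqFinrank _ h hcard, fun σ => by simp⟩

theorem IsPrimitiveRoot.isNormalBasisGenerator_sum_pow_prime_pow {p k : ℕ} (hp : p.Prime)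
    (hk : 1 ≤ k) {K : Type*} [Field K] [Algebra ℚ K] [IsCyclotomicExtension {p ^ k} ℚ K]
    {ζ : K} (hζ : IsPrimitiveRoot ζ (p ^ k)) :
    IsNormalBasisGenerator K (∑ j ∈ range k, ζ ^ p ^ j) := by
  have : NeZero (p ^ k) := ⟨pow_ne_zero k hp.ne_zero⟩
  have := IsCyclotomicExtension.finiteDimensional {p ^ k} ℚ K
  have := IsCyclotomicExtension.isGalois {p ^ k} ℚ K
  refine isNormalBasisGenerator_of_top_le_span ?_
  have hconj : ∀ u : ℕ, u.Coprime p → ∑ i ∈ range k, (ζ ^ u) ^ p ^ i ∈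
      Submodule.span ℚ (Set.range fun σ : K ≃ₐ[ℚ] K => σ (∑ j ∈ range k, ζ ^ p ^ j)) := by
    intro u hu
    obtain ⟨σ, hσ⟩ := IsCyclotomicExtension.exists_algEquiv_apply_eq_pow hζ (hu.pow_right k)
    exact Submodule.subset_span ⟨σ, by simp only [map_sum, map_pow, hσ]⟩
  rw [← (hζ.powerBasis ℚ).basis.span_eq, Submodule.span_le]
  rintro _ ⟨i, rfl⟩
  simpa only [PowerBasis.coe_basis, powerBasis_gen, SetLike.mem_coe] using
    hζ.pow_mem_of_forall_coprime_sum_mem hp hk hconj i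

theorem stmt_0 (p k : ℕ) (hp : p.Prime) (hk : 1 ≤ k) (N : ℕ+) (hN : (N : ℕ) = p ^ k)
    (ζ : CyclotomicField N ℚ) (hζ : IsPrimitiveRoot ζ (p ^ k)) :
    IsNormalBasisGenerator (CyclotomicField N ℚ) (∑ j ∈ Finset.range k, ζ ^ p ^ j) := by
  have : NeZero ((N : ℕ) : ℚ) := ⟨by exact_mod_cast N.ne_zero⟩
  have : IsCyclotomicExtension {p ^ k} ℚ (CyclotomicField N ℚ) :=
    hN ▸ CyclotomicField.isCyclotomicExtension (N : ℕ) ℚ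
  exact hζ.isNormalBasisGenerator_sum_pow_prime_pow hp hk
end

section
/- Let p be a prime and k ≥ 1 an integer. Let ζ be a fixed primitive p^{k+1}-th root of unity in L = ℚ(ζ_{p^{k+1}}), and for each unit u ∈ (ℤ/p^{k+1}ℤ)^× let σ_u denote the unique automorphism of L over ℚ with σ_u(ζ) = ζ^{u'} for any natural number u' representing u. Set η = ζ + ζ^p + ⋯ + ζ^{p^k} (sum of ζ^{p^j} for 0 ≤ j ≤ k). Then for every unit v ∈ (ℤ/p^kℤ)^× and every unit w ∈ (ℤ/p^{k+1}ℤ)^× reducing to v modulo p^k, one has Σ_{u} σ_u(η) = p · σ_w(ζ^p + ζ^{p^2} + ⋯ + ζ^{p^k}), where the sum on the left runs over all units u ∈ (ℤ/p^{k+1}ℤ)^× whose reduction modulo p^k equals v. -/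
theorem stmt_3 (p k : ℕ) (hp : p.Prime) (hk : 1 ≤ k) (N : ℕ+) (hN : (N : ℕ) = p ^ (k + 1))
    (ζ : CyclotomicField N ℚ) (hζ : IsPrimitiveRoot ζ (p ^ (k + 1)))
    (σ : (ZMod (p ^ (k + 1)))ˣ → (CyclotomicField N ℚ ≃ₐ[ℚ] CyclotomicField N ℚ))
    (hσ : ∀ (u : (ZMod (p ^ (k + 1)))ˣ) (u' : ℕ),
      (u' : ZMod (p ^ (k + 1))) = (u : ZMod (p ^ (k + 1))) → σ u ζ = ζ ^ u')
    (v : (ZMod (p ^ k))ˣ) (w : (ZMod (p ^ (k + 1)))ˣ)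
    (hw : Units.map (ZMod.castHom (pow_dvd_pow p k.le_succ) (ZMod (p ^ k))).toMonoidHom w = v) :
    ∑ᶠ u ∈ {u : (ZMod (p ^ (k + 1)))ˣ |
        Units.map (ZMod.castHom (pow_dvd_pow p k.le_succ) (ZMod (p ^ k))).toMonoidHom u = v},
        σ u (∑ j ∈ Finset.range (k + 1), ζ ^ p ^ j) =
      (p : CyclotomicField N ℚ) * σ w (∑ j ∈ Finset.Icc 1 k, ζ ^ p ^ j) := by
  classical
  haveI : NeZero (p ^ (k + 1)) := ⟨pow_ne_zero _ hp.ne_zero⟩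
  set red := fun u : (ZMod (p ^ (k + 1)))ˣ =>
    Units.map (ZMod.castHom (pow_dvd_pow p k.le_succ) (ZMod (p ^ k))).toMonoidHom u with hred
  set b := ((w : ZMod (p ^ (k + 1)))).val with hb
  have hbcop : Nat.Coprime b (p ^ (k + 1)) := ZMod.val_coe_unit_coprime w
  have hpb : ¬ p ∣ b :=
    hp.coprime_iff_not_dvd.mp
      ((hbcop.coprime_dvd_right (dvd_pow_self p (Nat.succ_ne_zero k))).symm)
  have hcop : ∀ t : ℕ, Nat.Coprime (b + t * p ^ k) (p ^ (k + 1)) := by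
    intro t
    have hpk : p ∣ t * p ^ k := Dvd.dvd.mul_left (dvd_pow_self p (by omega)) t
    have h1 : ¬ p ∣ (b + t * p ^ k) := by
      intro h; exact hpb ((Nat.dvd_add_right hpk).mp (by rwa [Nat.add_comm] at h))
    exact ((hp.coprime_iff_not_dvd.mpr h1).symm).pow_right (k + 1)
  set g : ℕ → (ZMod (p ^ (k + 1)))ˣ := fun t => ZMod.unitOfCoprime _ (hcop t) with hg
  have hgcoe : ∀ t : ℕ, ((g t : ZMod (p ^ (k + 1)))) = ((b + t * p ^ k : ℕ) : ZMod (p ^ (k + 1))) :=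
    fun t => ZMod.coe_unitOfCoprime _ _
  have hwb : ((b : ℕ) : ZMod (p ^ (k + 1))) = (w : ZMod (p ^ (k + 1))) := by
    simp [hb, ZMod.natCast_val, ZMod.cast_id]
  -- membership characterization
  have hmem : ∀ u : (ZMod (p ^ (k + 1)))ˣ, red u = v ↔ ∃ t ∈ Finset.range p, g t = u := by
    intro u
    constructor
    · intro h
      set a := ((u : ZMod (p ^ (k + 1)))).val with ha
      have hua : ((a : ℕ) : ZMod (p ^ (k + 1))) = (u : ZMod (p ^ (k + 1))) := by
        simp [ha, ZMod.natCast_val, ZMod.cast_id]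
      have hcasts : ((a : ℕ) : ZMod (p ^ k)) = ((b : ℕ) : ZMod (p ^ k)) := by
        have := congrArg (fun x : (ZMod (p ^ k))ˣ => (x : ZMod (p ^ k))) (h.trans hw.symm)
        simp only [hred, Units.coe_map, RingHom.toMonoidHom_eq_coe, MonoidHom.coe_coe,
          ← hua, ← hwb, map_natCast] at this
        exact this
      have hmod : a ≡ b [MOD p ^ k] := (ZMod.natCast_eq_natCast_iff _ _ _).mp hcasts
      have hm' : a % p ^ k = b % p ^ k := hmod
      have halt : a < p ^ k * p := by rw [← pow_succ]; exact ZMod.val_lt _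
      have hblt : b < p ^ k * p := by rw [← pow_succ]; exact ZMod.val_lt _
      have hPpos : 0 < p ^ k := pow_pos hp.pos k
      obtain ⟨qa, r, hqalt, hrlt, hra⟩ :
          ∃ q r, q < p ∧ r < p ^ k ∧ a = q * p ^ k + r :=
        ⟨a / p ^ k, a % p ^ k, Nat.div_lt_of_lt_mul halt, Nat.mod_lt _ hPpos, by
          rw [Nat.mul_comm]; exact (Nat.div_add_mod a _).symm⟩
      obtain ⟨qb, hqblt, hrb⟩ : ∃ q, q < p ∧ b = q * p ^ k + r :=
        ⟨b / p ^ k, Nat.div_lt_of_lt_mul hblt, by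
          have hr : r = b % p ^ k := by
            have h1 : a % p ^ k = r := by
              rw [hra, Nat.add_comm, Nat.add_mul_mod_self_right, Nat.mod_eq_of_lt hrlt]
            omega
          rw [hr, Nat.mul_comm]; exact (Nat.div_add_mod b _).symm⟩
      refine ⟨(qa + p - qb) % p, Finset.mem_range.mpr (Nat.mod_lt _ hp.pos), ?_⟩
      have hqmod : qb + (qa + p - qb) % p ≡ qa [MOD p] := by
        calc qb + (qa + p - qb) % p ≡ qb + (qa + p - qb) [MOD p] :=
              Nat.ModEq.add_left qb (Nat.mod_modEq _ _)
          _ = qa + p := by omega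
          _ ≡ qa [MOD p] := by
              simpa using (Nat.ModEq.refl qa).add (Nat.modEq_zero_iff_dvd.mpr dvd_rfl)
      have hexp : b + (qa + p - qb) % p * p ^ k ≡ a [MOD p ^ (k + 1)] := by
        have h1 : (qb + (qa + p - qb) % p) * p ^ k ≡ qa * p ^ k [MOD p * p ^ k] :=
          hqmod.mul_right' _
        have h2 : (qb + (qa + p - qb) % p) * p ^ k + r ≡ qa * p ^ k + r
            [MOD p * p ^ k] := h1.add_right _
        rw [Nat.mul_comm p (p ^ k), ← pow_succ] at h2
        calc b + (qa + p - qb) % p * p ^ k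
            = (qb + (qa + p - qb) % p) * p ^ k + r := by rw [hrb]; ring
          _ ≡ qa * p ^ k + r [MOD p ^ (k + 1)] := h2
          _ = a := hra.symm
      apply Units.ext
      rw [hgcoe, ← hua]
      exact (ZMod.natCast_eq_natCast_iff _ _ _).mpr hexp
    · rintro ⟨t, -, rfl⟩
      rw [← hw]
      apply Units.ext
      simp only [hred, Units.coe_map, RingHom.toMonoidHom_eq_coe, MonoidHom.coe_coe, hgcoe,
        ← hwb, map_natCast]
      push_cast
      have hz : ((p : ZMod (p ^ k)) ^ k) = 0 := by
        rw [← Nat.cast_pow, ZMod.natCast_self]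
      simp [hz]
  -- injectivity of g on range p
  have hginj : ∀ s ∈ Finset.range p, ∀ t ∈ Finset.range p, g s = g t → s = t := by
    intro s hs t ht h
    have h1 := congrArg (fun x : (ZMod (p ^ (k + 1)))ˣ => (x : ZMod (p ^ (k + 1)))) h
    simp only [hgcoe] at h1
    have h2 : b + s * p ^ k ≡ b + t * p ^ k [MOD p ^ (k + 1)] :=
      (ZMod.natCast_eq_natCast_iff _ _ _).mp h1
    have h3 : s * p ^ k ≡ t * p ^ k [MOD p ^ (k + 1)] := h2.add_left_cancel' b
    have h3' : s * p ^ k ≡ t * p ^ k [MOD p * p ^ k] := by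
      rwa [pow_succ, Nat.mul_comm (p ^ k) p] at h3
    have h4 : s ≡ t [MOD p] := h3'.mul_right_cancel' (pow_pos hp.pos k).ne'
    rw [Finset.mem_range] at hs ht
    exact h4.eq_of_lt_of_lt hs ht
  -- rewrite the finsum as a finset sum over the image
  have hsetfin : {u : (ZMod (p ^ (k + 1)))ˣ | red u = v} =
      ↑((Finset.range p).image g) := by
    ext u
    simp only [Set.mem_setOf_eq, Finset.coe_image, Set.mem_image, Finset.mem_coe,
      Finset.mem_range, hmem u]
  rw [hsetfin, finsum_mem_coe_finset, Finset.sum_image hginj]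
  -- compute the action of σ
  have hσg : ∀ t : ℕ, σ (g t) (∑ j ∈ Finset.range (k + 1), ζ ^ p ^ j) =
      ∑ j ∈ Finset.range (k + 1), ζ ^ ((b + t * p ^ k) * p ^ j) := by
    intro t
    rw [map_sum]
    refine Finset.sum_congr rfl fun j _ => ?_
    rw [map_pow, hσ (g t) (b + t * p ^ k) (hgcoe t).symm, ← pow_mul]
  have hσw : σ w (∑ j ∈ Finset.Icc 1 k, ζ ^ p ^ j) =
      ∑ j ∈ Finset.Icc 1 k, ζ ^ (b * p ^ j) := by
    rw [map_sum]
    refine Finset.sum_congr rfl fun j _ => ?_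
    rw [map_pow, hσ w b hwb, ← pow_mul]
  simp only [hσg, hσw]
  rw [Finset.sum_comm]
  have hrange : Finset.range (k + 1) = insert 0 (Finset.Icc 1 k) := by
    ext j; simp only [Finset.mem_range, Finset.mem_insert, Finset.mem_Icc]; omega
  rw [hrange, Finset.sum_insert (by simp)]
  -- the j = 0 term vanishes
  have hξ : IsPrimitiveRoot (ζ ^ p ^ k) p := hζ.pow (pow_pos hp.pos _) (pow_succ p k)
  have hzero : ∑ t ∈ Finset.range p, ζ ^ ((b + t * p ^ k) * p ^ 0) = 0 := by
    have key : ∀ t : ℕ, ζ ^ ((b + t * p ^ k) * p ^ 0) = ζ ^ b * (ζ ^ p ^ k) ^ t := by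
      intro t
      rw [pow_zero, mul_one, pow_add, mul_comm t (p ^ k), pow_mul]
    simp only [key]
    rw [← Finset.mul_sum, hξ.geom_sum_eq_zero hp.one_lt, mul_zero]
  rw [hzero, zero_add]
  -- the remaining terms
  have hterm : ∀ j ∈ Finset.Icc 1 k, ∑ t ∈ Finset.range p, ζ ^ ((b + t * p ^ k) * p ^ j) =
      (p : CyclotomicField N ℚ) * ζ ^ (b * p ^ j) := by
    intro j hj
    rw [Finset.mem_Icc] at hj
    have hone : ∀ t : ℕ, ζ ^ ((b + t * p ^ k) * p ^ j) = ζ ^ (b * p ^ j) := by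
      intro t
      have hdvd : p ^ (k + 1) ∣ t * p ^ k * p ^ j := by
        have h1 : p ^ (k + 1) ∣ p ^ k * p ^ j := by
          rw [← pow_add]; exact pow_dvd_pow p (by omega)
        rw [mul_assoc]
        exact Dvd.dvd.mul_left h1 t
      rw [add_mul, pow_add, (hζ.pow_eq_one_iff_dvd _).mpr hdvd, mul_one]
    simp only [hone]
    rw [Finset.sum_const, Finset.card_range, nsmul_eq_mul]
  rw [Finset.sum_congr rfl hterm, ← Finset.mul_sum]
end

section
/- Let n and m be coprime positive integers. Denote by x, y, z the residue classes of the variable in the quotient ℚ-algebras A = ℚ[X]/(X^n − 1), B = ℚ[X]/(X^m − 1), and C = ℚ[X]/(X^{nm} − 1) respectively. Then there is a ℚ-algebra homomorphism Φ : A ⊗_ℚ B → C with Φ(x ⊗ 1) = z^m and Φ(1 ⊗ y) = z^n, and any such Φ is bijective. -/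
/-!
The elements `z ^ m` and `z ^ n` are an `n`-th and an `m`-th root of unity in `C`, so the
universal properties of `AdjoinRoot` and of the tensor product give `Φ`. Since `gcd(n, m) = 1`,
there are natural numbers `a, b` with `n * a + m * b ≡ 1 [MOD n * m]`, hence
`z = (z ^ n) ^ a * (z ^ m) ^ b` lies in the image of any such `Φ`. As `z` generates `C`, `Φ` is
surjective, and a surjection between `ℚ`-spaces of the same dimension `n * m` is bijective.
-/

open Polynomial TensorProduct

theorem Nat.Coprime.exists_mul_add_mul_modEq_one {n m : ℕ} (h : n.Coprime m) (N : ℕ) [NeZero N] :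
    ∃ a b : ℕ, n * a + m * b ≡ 1 [MOD N] := by
  refine ⟨(n.gcdA m : ZMod N).val, (n.gcdB m : ZMod N).val, ?_⟩
  have bezout := congrArg (Int.cast : ℤ → ZMod N) (Nat.gcd_eq_gcd_ab n m)
  rw [h] at bezout
  rw [← ZMod.natCast_eq_natCast_iff]
  push_cast [ZMod.natCast_zmod_val] at bezout ⊢
  exact bezout.symm

theorem IsOfFinOrder.exists_pow_mul_pow_eq_self {M : Type*} [Monoid M] {x : M}
    (hx : IsOfFinOrder x) {n m : ℕ} (h : n.Coprime m) :
    ∃ a b : ℕ, (x ^ n) ^ a * (x ^ m) ^ b = x := by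
  have : NeZero (orderOf x) := ⟨hx.orderOf_pos.ne'⟩
  obtain ⟨a, b, hab⟩ := h.exists_mul_add_mul_modEq_one (orderOf x)
  refine ⟨a, b, ?_⟩
  rw [← pow_mul, ← pow_mul, ← pow_add, hx.pow_eq_pow_iff_modEq.2 hab, pow_one]

namespace AdjoinRoot

section CommRing

variable {R : Type*} [CommRing R]

theorem root_X_pow_sub_one_pow (k : ℕ) : root (X ^ k - 1 : R[X]) ^ k = 1 := by
  have hzero := mk_self (f := (X ^ k - 1 : R[X]))
  rwa [map_sub, map_pow, map_one, mk_X, sub_eq_zero] at hzero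

theorem finite_X_pow_sub_one {k : ℕ} (hk : k ≠ 0) :
    Module.Finite R (AdjoinRoot (X ^ k - 1 : R[X])) := by
  rw [← C_1]
  exact (monic_X_pow_sub_C 1 hk).finite_adjoinRoot

theorem exists_algHom_tensorProduct_X_pow_sub_one {S : Type*} [CommRing S] [Algebra R S]
    {n m : ℕ} {s t : S} (hs : s ^ n = 1) (ht : t ^ m = 1) :
    ∃ Φ : AdjoinRoot (X ^ n - 1 : R[X]) ⊗[R] AdjoinRoot (X ^ m - 1 : R[X]) →ₐ[R] S,
      Φ (root (X ^ n - 1 : R[X]) ⊗ₜ[R] 1) = s ∧ Φ (1 ⊗ₜ[R] root (X ^ m - 1 : R[X])) = t :=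
  ⟨Algebra.TensorProduct.productMap
      (liftAlgHom _ (Algebra.ofId R S) s (by simp [hs]))
      (liftAlgHom _ (Algebra.ofId R S) t (by simp [ht])),
    by simp [liftAlgHom_root], by simp [liftAlgHom_root]⟩

theorem surjective_of_root_mem_range {S : Type*} [Semiring S] [Algebra R S] {f : R[X]}
    (Φ : S →ₐ[R] AdjoinRoot f) (h : root f ∈ Φ.range) : Function.Surjective Φ := by
  rw [← AlgHom.range_eq_top, eq_top_iff, ← adjoinRoot_eq_top, Algebra.adjoin_le_iff,
    Set.singleton_subset_iff]
  exact h

end CommRing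

theorem finrank_X_pow_sub_one {K : Type*} [Field K] (k : ℕ) :
    Module.finrank K (AdjoinRoot (X ^ k - 1 : K[X])) = k := by
  rw [← C_1]
  exact finrank_quotient_span_eq_natDegree.trans natDegree_X_pow_sub_C

end AdjoinRoot

open AdjoinRoot in
theorem stmt_4 (n m : ℕ) (hn : 0 < n) (hm : 0 < m) (h : Nat.Coprime n m) :
    (∃ Φ : AdjoinRoot (X ^ n - 1 : ℚ[X]) ⊗[ℚ] AdjoinRoot (X ^ m - 1 : ℚ[X]) →ₐ[ℚ]
        AdjoinRoot (X ^ (n * m) - 1 : ℚ[X]),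
      Φ (AdjoinRoot.root (X ^ n - 1 : ℚ[X]) ⊗ₜ[ℚ] 1) =
          AdjoinRoot.root (X ^ (n * m) - 1 : ℚ[X]) ^ m ∧
        Φ (1 ⊗ₜ[ℚ] AdjoinRoot.root (X ^ m - 1 : ℚ[X])) =
          AdjoinRoot.root (X ^ (n * m) - 1 : ℚ[X]) ^ n) ∧
      ∀ Φ : AdjoinRoot (X ^ n - 1 : ℚ[X]) ⊗[ℚ] AdjoinRoot (X ^ m - 1 : ℚ[X]) →ₐ[ℚ]
          AdjoinRoot (X ^ (n * m) - 1 : ℚ[X]),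
        (Φ (AdjoinRoot.root (X ^ n - 1 : ℚ[X]) ⊗ₜ[ℚ] 1) =
            AdjoinRoot.root (X ^ (n * m) - 1 : ℚ[X]) ^ m ∧
          Φ (1 ⊗ₜ[ℚ] AdjoinRoot.root (X ^ m - 1 : ℚ[X])) =
            AdjoinRoot.root (X ^ (n * m) - 1 : ℚ[X]) ^ n) →
        Function.Bijective Φ := by
  have hz := root_X_pow_sub_one_pow (R := ℚ) (n * m)
  refine ⟨exists_algHom_tensorProduct_X_pow_sub_one
    (by rw [← pow_mul, mul_comm m n, hz]) (by rw [← pow_mul, hz]), ?_⟩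
  rintro Φ ⟨hΦx, hΦy⟩
  obtain ⟨a, b, hab⟩ :=
    (isOfFinOrder_iff_pow_eq_one.2 ⟨n * m, by positivity, hz⟩).exists_pow_mul_pow_eq_self h
  have hsurj : Function.Surjective Φ := surjective_of_root_mem_range Φ <| Φ.mem_range.2
    ⟨(1 ⊗ₜ root _) ^ a * (root _ ⊗ₜ 1) ^ b, by rw [map_mul, map_pow, map_pow, hΦx, hΦy, hab]⟩
  have := finite_X_pow_sub_one (R := ℚ) hn.ne'
  have := finite_X_pow_sub_one (R := ℚ) hm.ne'
  have := finite_X_pow_sub_one (R := ℚ) (Nat.mul_pos hn hm).ne'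
  have hdim : Module.finrank ℚ
      (AdjoinRoot (X ^ n - 1 : ℚ[X]) ⊗[ℚ] AdjoinRoot (X ^ m - 1 : ℚ[X])) =
        Module.finrank ℚ (AdjoinRoot (X ^ (n * m) - 1 : ℚ[X])) := by
    rw [Module.finrank_tensorProduct, finrank_X_pow_sub_one, finrank_X_pow_sub_one,
      finrank_X_pow_sub_one]
  exact ⟨(LinearMap.injective_iff_surjective_of_finrank_eq_finrank (f := Φ.toLinearMap)
    hdim).2 hsurj, hsurj⟩
end

section
/- Let n and m be coprime positive integers, and let f : ℚ(ζ_n) → ℚ(ζ_{nm}) and g : ℚ(ζ_m) → ℚ(ζ_{nm}) be ℚ-algebra homomorphisms. If α is a normal basis generator of ℚ(ζ_n)/ℚ and β is a normal basis generator of ℚ(ζ_m)/ℚ, then the product f(α)·g(β) is a normal basis generator of ℚ(ζ_{nm})/ℚ. -/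
open Algebra.TensorProduct (productMap)

namespace Module.Basis

variable {R A B S ι₁ ι₂ : Type*} [CommSemiring R] [CommSemiring A] [CommSemiring B]
  [CommSemiring S] [Algebra R A] [Algebra R B] [Algebra R S] {f : A →ₐ[R] S} {g : B →ₐ[R] S}

noncomputable def ofProductMap (hfg : Function.Bijective (productMap f g))
    (b₁ : Basis ι₁ R A) (b₂ : Basis ι₂ R B) : Basis (ι₁ × ι₂) R S :=
  (b₁.tensorProduct b₂).map (LinearEquiv.ofBijective (productMap f g).toLinearMap hfg)

theorem ofProductMap_apply (hfg : Function.Bijective (productMap f g))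
    (b₁ : Basis ι₁ R A) (b₂ : Basis ι₂ R B) (i : ι₁ × ι₂) :
    ofProductMap hfg b₁ b₂ i = f (b₁ i.1) * g (b₂ i.2) := by
  rw [ofProductMap, map_apply, tensorProduct_apply']
  rfl

end Module.Basis

theorem IsPrimitiveRoot.mul_of_coprime {M : Type*} [CommMonoid M] {ζ ξ : M} {k l : ℕ}
    (hζ : IsPrimitiveRoot ζ k) (hξ : IsPrimitiveRoot ξ l) (h : k.Coprime l) :
    IsPrimitiveRoot (ζ * ξ) (k * l) := by
  rw [IsPrimitiveRoot.iff_orderOf] at *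
  subst hζ hξ
  exact (Commute.all ζ ξ).orderOf_mul_eq_mul_orderOf_of_coprime h

namespace AlgEquiv

variable {F K₁ K : Type*} [Field F] [Field K₁] [Field K] [Algebra F K₁] [Algebra F K]
  [Normal F K₁]

noncomputable def restrictAlong (f : K₁ →ₐ[F] K) (σ : K ≃ₐ[F] K) : K₁ ≃ₐ[F] K₁ :=
  letI := f.toAlgebra
  haveI : IsScalarTower F K₁ K := .of_algebraMap_eq fun x ↦ (f.commutes x).symm
  σ.restrictNormal K₁

theorem restrictAlong_commutes (f : K₁ →ₐ[F] K) (σ : K ≃ₐ[F] K) (x : K₁) :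
    f (σ.restrictAlong f x) = σ (f x) :=
  letI := f.toAlgebra
  haveI : IsScalarTower F K₁ K := .of_algebraMap_eq fun x ↦ (f.commutes x).symm
  σ.restrictNormal_commutes K₁ x

end AlgEquiv

section RestrictAlongProd

open AlgEquiv Function

variable {F K₁ K₂ K : Type*} [Field F] [Field K₁] [Field K₂] [Field K] [Algebra F K₁]
  [Algebra F K₂] [Algebra F K] {f : K₁ →ₐ[F] K} {g : K₂ →ₐ[F] K}

theorem injective_restrictAlong_prod [Normal F K₁] [Normal F K₂]
    (hfg : Surjective (productMap f g)) :
    Injective fun σ : K ≃ₐ[F] K ↦ (σ.restrictAlong f, σ.restrictAlong g) := by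
  intro σ τ hστ
  obtain ⟨hf, hg⟩ := Prod.mk.inj hστ
  have hcomp : (σ : K →ₐ[F] K).comp (productMap f g) = (τ : K →ₐ[F] K).comp (productMap f g) :=
    Algebra.TensorProduct.ext' fun a b ↦ by
      change σ (f a * g b) = τ (f a * g b)
      rw [map_mul, map_mul, ← restrictAlong_commutes, ← restrictAlong_commutes, hf, hg,
        restrictAlong_commutes, restrictAlong_commutes]
  ext y
  obtain ⟨t, rfl⟩ := hfg y
  exact AlgHom.congr_fun hcomp t

variable [FiniteDimensional F K₁] [FiniteDimensional F K₂] [IsGalois F K₁] [IsGalois F K₂]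
  [IsGalois F K]

theorem bijective_restrictAlong_prod (hfg : Bijective (productMap f g)) :
    Bijective fun σ : K ≃ₐ[F] K ↦ (σ.restrictAlong f, σ.restrictAlong g) := by
  let e := LinearEquiv.ofBijective (productMap f g).toLinearMap hfg
  have : FiniteDimensional F K := e.finiteDimensional
  refine (Nat.bijective_iff_injective_and_card _).mpr ⟨injective_restrictAlong_prod hfg.2, ?_⟩
  rw [Nat.card_prod, IsGalois.card_aut_eq_finrank, IsGalois.card_aut_eq_finrank,
    IsGalois.card_aut_eq_finrank, ← e.finrank_eq, Module.finrank_tensorProduct]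

theorem exists_basis_eq_aut_apply_mul (hfg : Bijective (productMap f g)) {α : K₁} {β : K₂}
    (hα : ∃ B : Module.Basis (K₁ ≃ₐ[F] K₁) F K₁, ∀ τ, B τ = τ α)
    (hβ : ∃ B : Module.Basis (K₂ ≃ₐ[F] K₂) F K₂, ∀ τ, B τ = τ β) :
    ∃ B : Module.Basis (K ≃ₐ[F] K) F K, ∀ σ, B σ = σ (f α * g β) := by
  obtain ⟨B₁, hB₁⟩ := hα
  obtain ⟨B₂, hB₂⟩ := hβ
  refine ⟨(B₁.ofProductMap hfg B₂).reindex (Equiv.ofBijective _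
    (bijective_restrictAlong_prod hfg)).symm, fun σ ↦ ?_⟩
  rw [Module.Basis.reindex_apply, Equiv.symm_symm, Equiv.ofBijective_apply,
    Module.Basis.ofProductMap_apply, hB₁, hB₂, map_mul, restrictAlong_commutes,
    restrictAlong_commutes]

end RestrictAlongProd

open IsCyclotomicExtension in
theorem IsCyclotomicExtension.Rat.bijective_productMap {n m : ℕ} [NeZero n] [NeZero m]
    (h : n.Coprime m) {K₁ K₂ K : Type*} [Field K₁] [Field K₂] [Field K] [CharZero K₁]
    [CharZero K₂] [CharZero K] [IsCyclotomicExtension {n} ℚ K₁] [IsCyclotomicExtension {m} ℚ K₂]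
    [IsCyclotomicExtension {n * m} ℚ K] (f : K₁ →ₐ[ℚ] K) (g : K₂ →ₐ[ℚ] K) :
    Function.Bijective (productMap f g) := by
  have := finiteDimensional {n} ℚ K₁
  have := finiteDimensional {m} ℚ K₂
  have := finiteDimensional {n * m} ℚ K
  have hζ : IsPrimitiveRoot (f (zeta n ℚ K₁) * g (zeta m ℚ K₂)) (n * m) :=
    ((zeta_spec n ℚ K₁).map_of_injective f.injective).mul_of_coprime
      ((zeta_spec m ℚ K₂).map_of_injective g.injective) h
  have hsurj : Function.Surjective (productMap f g) := by
    rw [← AlgHom.range_eq_top, eq_top_iff, ← adjoin_primitive_root_eq_top hζ,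
      Algebra.adjoin_le_iff, Set.singleton_subset_iff]
    exact ⟨zeta n ℚ K₁ ⊗ₜ zeta m ℚ K₂, rfl⟩
  have hfinrank : Module.finrank ℚ (TensorProduct ℚ K₁ K₂) = Module.finrank ℚ K := by
    rw [Module.finrank_tensorProduct, finrank n K₁, finrank m K₂, finrank (n * m) K,
      Nat.totient_mul h]
  exact ⟨(LinearMap.injective_iff_surjective_of_finrank_eq_finrank hfinrank).mpr hsurj, hsurj⟩

-- Mathlib's instance is stated for `CyclotomicField.algebra`, which instance search does not
-- identify with the `DivisionRing.toRatAlgebra` structure that `ℚ`-algebra maps use here.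
instance CyclotomicField.isCyclotomicExtension_rat (n : ℕ) [NeZero n] :
    IsCyclotomicExtension {n} ℚ (CyclotomicField n ℚ) :=
  CyclotomicField.isCyclotomicExtension n ℚ

instance CyclotomicField.isGalois_rat (n : ℕ) [NeZero n] : IsGalois ℚ (CyclotomicField n ℚ) :=
  IsCyclotomicExtension.isGalois {n} ℚ _

theorem stmt_11 (n m : ℕ+) (h : Nat.Coprime n m)
    (f : CyclotomicField n ℚ →ₐ[ℚ] CyclotomicField (n * m) ℚ)
    (g : CyclotomicField m ℚ →ₐ[ℚ] CyclotomicField (n * m) ℚ)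
    (α : CyclotomicField n ℚ) (hα : IsNormalBasisGenerator (CyclotomicField n ℚ) α)
    (β : CyclotomicField m ℚ) (hβ : IsNormalBasisGenerator (CyclotomicField m ℚ) β) :
    IsNormalBasisGenerator (CyclotomicField (n * m) ℚ) (f α * g β) :=
  exists_basis_eq_aut_apply_mul (IsCyclotomicExtension.Rat.bijective_productMap h f g) hα hβ
end

section
/- Let G be a finite group and let M be a left module over the group algebra ℚ[G]. Let π_e : ℚ[G] → ℚ denote the ℚ-linear form assigning to an element of the group algebra its coefficient at the neutral element of G. Then the map sending a ℚ[G]-module homomorphism φ : M → ℚ[G] to the ℚ-linear form π_e ∘ φ : M → ℚ is a ℚ-linear bijection from the space of ℚ[G]-module homomorphisms Hom_{ℚ[G]}(M, ℚ[G]) onto the space of all ℚ-linear forms Hom_ℚ(M, ℚ). -/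
/-- The `ℚ`-linear form on the group algebra `ℚ[G]` given by taking the coefficient
at the neutral element of `G`. -/
noncomputable def coeffAtOne (G : Type*) [Group G] : MonoidAlgebra ℚ G →ₗ[ℚ] ℚ :=
  Finsupp.lapply (1 : G) ∘ₗ (MonoidAlgebra.coeffLinearEquiv ℚ).toLinearMap

/-! A `k[G]`-linear map `φ : M → k[G]` is determined by its coefficient at `1`, because the
coefficient of `φ m` at `g` is the coefficient at `1` of `φ (g⁻¹ • m)`. Conversely, for finite `G`
a `k`-linear form `f` lifts to `m ↦ ∑ g, single g (f (g⁻¹ • m))`, which is `G`-equivariant after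
reindexing the sum by left multiplication. -/

namespace MonoidAlgebra

section CoeffOne

variable (k G : Type*) [CommSemiring k] [Group G]

noncomputable def coeffOne : k[G] →ₗ[k] k :=
  Finsupp.lapply (1 : G) ∘ₗ (coeffLinearEquiv k).toLinearMap

variable {k G}

@[simp]
lemma coeffOne_apply (x : k[G]) : coeffOne k G x = x.coeff 1 := rfl

lemma coeffOne_single_inv_mul (g : G) (x : k[G]) :
    coeffOne k G (single g⁻¹ 1 * x) = x.coeff g := by
  simp

end CoeffOne

variable {k G M : Type*} [CommSemiring k] [Group G] [Fintype G] [AddCommMonoid M]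
  [Module k[G] M] [Module k M] [IsScalarTower k k[G] M]

noncomputable def dualToHom (f : M →ₗ[k] k) : M →ₗ[k[G]] k[G] :=
  equivariantOfLinearOfComm (∑ g : G, lsingle g ∘ₗ f ∘ₗ GroupSMul.linearMap k M g⁻¹)
    fun h m => by
      simp only [LinearMap.sum_apply, LinearMap.comp_apply, GroupSMul.linearMap_apply,
        lsingle_apply, smul_smul, single_mul_single, mul_one, Finset.smul_sum]
      rw [← Equiv.sum_comp (Equiv.mulLeft h)]
      simp only [Equiv.coe_mulLeft, mul_inv_rev, inv_mul_cancel_right, smul_eq_mul,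
        single_mul_single, one_mul]

lemma coeff_dualToHom (f : M →ₗ[k] k) (m : M) (g : G) :
    (dualToHom f m).coeff g = f (single g⁻¹ (1 : k) • m) := by
  classical
  simp [dualToHom, coeff_sum, Finsupp.single_apply]

variable (k G M) in
noncomputable def homEquivDual : (M →ₗ[k[G]] k[G]) ≃ₗ[k] (M →ₗ[k] k) where
  toFun φ := coeffOne k G ∘ₗ φ.restrictScalars k
  map_add' φ ψ := by ext; simp
  map_smul' c φ := by ext; simp
  invFun := dualToHom
  left_inv φ := by
    ext m g
    rw [coeff_dualToHom, LinearMap.comp_apply, LinearMap.restrictScalars_apply, map_smul,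
      smul_eq_mul, coeffOne_single_inv_mul]
  right_inv f := by
    ext m
    simp [coeff_dualToHom, ← one_def]

end MonoidAlgebra

theorem stmt_13 (G : Type*) [Group G] [Fintype G] (M : Type*) [AddCommGroup M]
    [Module (MonoidAlgebra ℚ G) M] [Module ℚ M] [IsScalarTower ℚ (MonoidAlgebra ℚ G) M] :
    IsLinearMap ℚ (fun φ : M →ₗ[MonoidAlgebra ℚ G] MonoidAlgebra ℚ G =>
        (coeffAtOne G).comp (φ.restrictScalars ℚ)) ∧
      Function.Bijective (fun φ : M →ₗ[MonoidAlgebra ℚ G] MonoidAlgebra ℚ G =>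
        (coeffAtOne G).comp (φ.restrictScalars ℚ)) :=
  ⟨(MonoidAlgebra.homEquivDual ℚ G M).toLinearMap.isLinear,
    (MonoidAlgebra.homEquivDual ℚ G M).bijective⟩
end
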